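/- For r ≥ 2, every finite-index subgroup of ℤ^(r-1) ⋊ Sym(r) has abelianization of torsion-free rank at most r - 1, and the finite-index subgroup ℤ^(r-1) has abelianization of rank exactly r - 1. -/

import Mathlib

/-!
If every `k`-th power (`k ≠ 0`) of a group `G` lies in the image `f(A)` of an abelian group, then for
any subgroup `H` the image of `H ∩ f(A)` in the abelianization of `H` contains `k • x` for every `x`;
so the abelianization is, up to torsion, a quotient of a subgroup of `A`, and its torsion-free rank
is at most that of `A`. In `ℤ^(r-1) ⋊ Sym(r)` every `r!`-th power lies in `ℤ^(r-1)`.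
-/

open SemidirectProduct

universe u

theorem rank_le_of_nsmul_mem_range {P M : Type u} [AddCommGroup P] [AddCommGroup M]
    (L : P →+ M) {k : ℕ} (hk : k ≠ 0) (hL : ∀ x, k • x ∈ L.range) :
    Module.rank ℤ M ≤ Module.rank ℤ P := by
  let L' := L.toIntLinearMap
  have h_quotient : Module.rank ℤ (M ⧸ LinearMap.range L') = 0 := by
    refine rank_eq_zero_iff.mpr fun x => ⟨k, by exact_mod_cast hk, ?_⟩
    induction x using Submodule.Quotient.induction_on with
    | H x =>
      rw [← Submodule.Quotient.mk_smul, Submodule.Quotient.mk_eq_zero, natCast_zsmul]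
      exact hL x
  calc Module.rank ℤ M = Module.rank ℤ (LinearMap.range L') := by
        rw [← rank_quotient_add_rank_of_isDomain, h_quotient, zero_add]
    _ ≤ Module.rank ℤ P := rank_range_le L'

theorem rank_abelianization_le_of_pow_mem_range {G A : Type u} [Group G] [CommGroup A]
    (f : A →* G) {k : ℕ} (hk : k ≠ 0) (hf : ∀ g : G, g ^ k ∈ f.range) (H : Subgroup G) :
    Module.rank ℤ (Additive (Abelianization H)) ≤ Module.rank ℤ (Additive A) := by
  let L := MonoidHom.toAdditive (Abelianization.of.comp (f.subgroupComap H))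
  calc Module.rank ℤ (Additive (Abelianization H)) ≤ Module.rank ℤ (Additive (H.comap f)) := by
        refine rank_le_of_nsmul_mem_range L hk fun x => ?_
        induction x using Quotient.inductionOn' with
        | h h =>
          obtain ⟨a, ha⟩ := hf h
          have ha_mem : a ∈ H.comap f := by
            rw [Subgroup.mem_comap, ha]
            exact pow_mem h.2 k
          refine ⟨Additive.ofMul ⟨a, ha_mem⟩, ?_⟩
          have h_pow : f.subgroupComap H ⟨a, ha_mem⟩ = h ^ k := Subtype.ext ha
          change Additive.ofMul (Abelianization.of (f.subgroupComap H ⟨a, ha_mem⟩)) =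
            k • Additive.ofMul (Abelianization.of h)
          rw [h_pow, map_pow, ofMul_pow]
    _ ≤ Module.rank ℤ (Additive A) :=
        LinearMap.rank_le_of_injective (MonoidHom.toAdditive (H.comap f).subtype).toIntLinearMap
          (H.comap f).subtype_injective

theorem SemidirectProduct.pow_card_mem_range_inl {N G : Type*} [Group N] [Group G] [Fintype G]
    {φ : G →* MulAut N} (g : N ⋊[φ] G) : g ^ Fintype.card G ∈ (inl : N →* N ⋊[φ] G).range := by
  rw [range_inl_eq_ker_rightHom, MonoidHom.mem_ker, map_pow, pow_card_eq_one]

theorem rank_abelianization_range_of_injective {G A : Type u} [Group G] [CommGroup A]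
    {f : A →* G} (hf : Function.Injective f) :
    Module.rank ℤ (Additive (Abelianization f.range)) = Module.rank ℤ (Additive A) :=
  (MulEquiv.toAdditive (((MonoidHom.ofInjective hf).symm.abelianizationCongr).trans
    Abelianization.equivOfComm.symm)).toIntLinearEquiv.rank_eq

theorem semidirect_rank_bound_general (r : ℕ)
    (μ : Equiv.Perm (Fin r) →* MulAut (Multiplicative (Fin (r - 1) → ℤ))) :
    (∀ H : Subgroup (Multiplicative (Fin (r - 1) → ℤ) ⋊[μ] Equiv.Perm (Fin r)),
      H.FiniteIndex →
        Module.rank ℤ (Additive (Abelianization H)) ≤ ((r - 1 : ℕ) : Cardinal)) ∧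
    (SemidirectProduct.inl (φ := μ)).range.FiniteIndex ∧
    Module.rank ℤ (Additive (Abelianization (SemidirectProduct.inl (φ := μ)).range))
      = ((r - 1 : ℕ) : Cardinal) := by
  have h_rank : Module.rank ℤ (Additive (Multiplicative (Fin (r - 1) → ℤ))) = (r - 1 : ℕ) := by
    rw [(AddEquiv.additiveMultiplicative _).toIntLinearEquiv.rank_eq, rank_fin_fun]
  refine ⟨fun H _ => ?_, ?_, ?_⟩
  · exact h_rank ▸ rank_abelianization_le_of_pow_mem_range inl Fintype.card_ne_zero
      pow_card_mem_range_inl H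
  · rw [range_inl_eq_ker_rightHom]
    infer_instance
  · rw [rank_abelianization_range_of_injective inl_injective, h_rank]

/-- For `r ≥ 2`, every finite-index subgroup of `ℤ^(r-1) ⋊ Sym(r)` has abelianization
of torsion-free rank at most `r - 1`, and the subgroup `ℤ^(r-1)` has finite index and
abelianization of rank exactly `r - 1`. -/
theorem semidirect_rank_bound (r : ℕ) (hr : 2 ≤ r)
    (μ : Equiv.Perm (Fin r) →* MulAut (Multiplicative (Fin (r - 1) → ℤ))) :
    (∀ H : Subgroup (Multiplicative (Fin (r - 1) → ℤ) ⋊[μ] Equiv.Perm (Fin r)),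
      H.FiniteIndex →
        Module.rank ℤ (Additive (Abelianization H)) ≤ ((r - 1 : ℕ) : Cardinal)) ∧
    (SemidirectProduct.inl (φ := μ)).range.FiniteIndex ∧
    Module.rank ℤ (Additive (Abelianization (SemidirectProduct.inl (φ := μ)).range))
      = ((r - 1 : ℕ) : Cardinal) :=
  semidirect_rank_bound_general r μ
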